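/- arXiv:2011.04869 — 4 statements merged into one kernel-verified Lean document; each statement's English description precedes it below -/
import Mathlib

section
/- Positive definiteness of the shifted Hessian at an index-1 saddle: let E be a real inner product space, let H : E → E be a symmetric linear map (⟨H a, b⟩ = ⟨a, H b⟩ for all a, b), let v ∈ E with ‖v‖ = 1 and H v = λ · v for some λ < 0, and suppose H is positive definite on the orthogonal complement of v, i.e. ⟨w, H w⟩ > 0 for every nonzero w with ⟨w, v⟩ = 0. Then for every real c > 1 and every nonzero u ∈ E, ⟨u, H u⟩ − c λ ⟨v, u⟩² > 0; that is, the operator H − c λ v vᵀ is positive definite. -/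
open RealInnerProductSpace

/-!
Split `u = w + t v` with `t = ⟪v, u⟫` and `w ⟂ v`. Since `v` is an eigenvector of the symmetric
map `H`, the cross terms of the quadratic form vanish and
`⟪u, H u⟫ - c λ t² = ⟪w, H w⟫ + (c - 1) (-λ) t²`.
Both summands are nonnegative, and since `u ≠ 0` either `w ≠ 0` or `t ≠ 0`, making one of them
strictly positive.
-/

section

variable {E : Type*} [NormedAddCommGroup E] [InnerProductSpace ℝ E]

theorem inner_sub_inner_smul_eq_zero_of_norm_eq_one {v : E} (hv : ‖v‖ = 1) (u : E) :
    ⟪v, u - ⟪v, u⟫ • v⟫ = 0 := by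
  rw [inner_sub_right, real_inner_smul_right, real_inner_self_eq_norm_sq, hv]
  ring

theorem LinearMap.IsSymmetric.inner_add_smul_eigenvector {H : E →ₗ[ℝ] E} (hH : H.IsSymmetric)
    {v : E} {lam : ℝ} (hev : H v = lam • v) {w : E} (hwv : ⟪v, w⟫ = 0) (t : ℝ) :
    ⟪w + t • v, H (w + t • v)⟫ = ⟪w, H w⟫ + lam * t ^ 2 * ‖v‖ ^ 2 := by
  have hvHw : ⟪v, H w⟫ = 0 := by
    rw [← hH, hev, real_inner_smul_left, hwv, mul_zero]
  have hwv' : ⟪w, v⟫ = 0 := real_inner_comm v w ▸ hwv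
  simp only [map_add, map_smul, inner_add_left, inner_add_right, real_inner_smul_left,
    real_inner_smul_right, hvHw, hwv', hev, real_inner_self_eq_norm_sq]
  ring

end

/-- Positive definiteness of the shifted Hessian at an index-1 saddle: if `H` is a
symmetric linear map, `v` a unit eigenvector with eigenvalue `λ < 0`, and `H` is
positive definite on the orthogonal complement of `v`, then for every `c > 1` and every
nonzero `u`, `⟨u, H u⟩ − c λ ⟨v, u⟩² > 0`; i.e. `H − c λ v vᵀ` is positive definite. -/
theorem shifted_hessian_pos_def {E : Type*} [NormedAddCommGroup E]
    [InnerProductSpace ℝ E] (H : E →ₗ[ℝ] E)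
    (hHsymm : ∀ a b : E, ⟪H a, b⟫ = ⟪a, H b⟫)
    (v : E) (hv : ‖v‖ = 1) (lam : ℝ) (hlam : lam < 0) (hev : H v = lam • v)
    (hpos : ∀ w : E, w ≠ 0 → ⟪w, v⟫ = 0 → 0 < ⟪w, H w⟫) :
    ∀ c : ℝ, 1 < c → ∀ u : E, u ≠ 0 → 0 < ⟪u, H u⟫ - c * lam * ⟪v, u⟫ ^ 2 := by
  intro c hc u hu
  set t := ⟪v, u⟫
  set w := u - t • v
  have hvw : ⟪v, w⟫ = 0 := inner_sub_inner_smul_eq_zero_of_norm_eq_one hv u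
  have hwv : ⟪w, v⟫ = 0 := real_inner_comm v w ▸ hvw
  have hw_nonneg : 0 ≤ ⟪w, H w⟫ := by
    rcases eq_or_ne w 0 with hw | hw
    · simp [hw]
    · exact (hpos w hw hwv).le
  have hshift : 0 < (c - 1) * -lam := mul_pos (by linarith) (by linarith)
  have hquad : ⟪u, H u⟫ - c * lam * t ^ 2 = ⟪w, H w⟫ + (c - 1) * -lam * t ^ 2 := by
    have hu_eq : u = w + t • v := (sub_add_cancel u _).symm
    rw [hu_eq, LinearMap.IsSymmetric.inner_add_smul_eigenvector hHsymm hev hvw, hv]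
    ring
  rw [hquad]
  rcases eq_or_ne t 0 with ht | ht
  · have hw : w ≠ 0 := by simpa [w, ht] using hu
    have := hpos w hw hwv
    positivity
  · have : 0 < t ^ 2 := by positivity
    positivity
end

section
/- The saddle point is a strict local minimizer of the IMF auxiliary functional (part (1) of the convergence theorem, with α = 0, β = 2): let E be a finite-dimensional real inner product space and F : E → ℝ be twice continuously differentiable. Suppose φ* ∈ E satisfies ∇F(φ*) = 0, and the second derivative B of F at φ* (a symmetric bilinear form) satisfies: there exist v ∈ E with ‖v‖ = 1 and λ < 0 such that B(v, w) = λ ⟨v, w⟩ for all w ∈ E, and B(w, w) > 0 for every nonzero w with ⟨w, v⟩ = 0 (so φ* is a nondegenerate index-1 saddle point). Define L(φ) = F(φ) − 2 F(φ* + ⟨v, φ − φ*⟩ · v). Then φ* is a strict local minimizer of L: there is ε > 0 such that L(φ) > L(φ*) for all φ ≠ φ* with ‖φ − φ*‖ < ε. -/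
open RealInnerProductSpace Topology Set Metric

/-!
Along the segment from `x` to `x + h`, a `C²` function `f` with `f' x = 0` increases as soon as
`f''` is positive on the segment, so a critical point with coercive Hessian is a strict local
minimum. For the IMF functional `L` the Hessian at `φ*` is `B h h - 2 B (πh) (πh)`, where `π` is the
orthogonal projection onto `v`: splitting `h = w + t v` with `w ⊥ v` turns it into
`B w w - λ t²`, positive definite since `λ < 0` and `B` is positive on `v⟂`, hence coercive in
finite dimension.
-/

theorem lt_of_deriv_eq_zero_of_deriv2_pos {g g' g'' : ℝ → ℝ} {a b : ℝ} (hab : a < b)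
    (hg : ∀ t, HasDerivAt g (g' t) t) (hg' : ∀ t, HasDerivAt g' (g'' t) t)
    (ha : g' a = 0) (hpos : ∀ t ∈ Icc a b, 0 < g'' t) : g a < g b := by
  have hg'_mono : StrictMonoOn g' (Icc a b) :=
    strictMonoOn_of_deriv_pos (convex_Icc a b) (fun t _ => (hg' t).continuousAt.continuousWithinAt)
      fun t ht => (hg' t).deriv ▸ hpos t (interior_subset ht)
  have hg_mono : StrictMonoOn g (Icc a b) :=
    strictMonoOn_of_deriv_pos (convex_Icc a b) (fun t _ => (hg t).continuousAt.continuousWithinAt)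
      fun t ht => by
        rw [interior_Icc] at ht
        rw [(hg t).deriv, ← ha]
        exact hg'_mono (left_mem_Icc.2 hab.le) (Ioo_subset_Icc_self ht) ht.1
  exact hg_mono (left_mem_Icc.2 hab.le) (right_mem_Icc.2 hab.le) hab

section SecondDerivativeTest

variable {E : Type*} [NormedAddCommGroup E] [NormedSpace ℝ E] {f : E → ℝ}

theorem lt_add_of_fderiv_fderiv_pos_on_segment (hf : ContDiff ℝ 2 f) {x h : E}
    (hx : fderiv ℝ f x h = 0)
    (hpos : ∀ t ∈ Icc (0 : ℝ) 1, 0 < fderiv ℝ (fderiv ℝ f) (x + t • h) h h) :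
    f x < f (x + h) := by
  have hline (t : ℝ) : HasDerivAt (fun t : ℝ => x + t • h) h t := by
    simpa using ((hasDerivAt_id t).smul_const h).const_add x
  have hf₁ : Differentiable ℝ f := hf.differentiable (by norm_num)
  have hf₂ : Differentiable ℝ (fderiv ℝ f) :=
    (hf.fderiv_right (m := 1) (by norm_num)).differentiable (by norm_num)
  simpa using lt_of_deriv_eq_zero_of_deriv2_pos zero_lt_one
    (fun t => (hf₁ _).hasFDerivAt.comp_hasDerivAt t (hline t))
    (fun t => (ContinuousLinearMap.apply ℝ ℝ h).hasFDerivAt.comp_hasDerivAt t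
      ((hf₂ _).hasFDerivAt.comp_hasDerivAt t (hline t)))
    (by simpa using hx) hpos

theorem eventually_lt_of_fderiv_eq_zero_of_isCoercive (hf : ContDiff ℝ 2 f) {x : E}
    (hx : fderiv ℝ f x = 0) (hB : IsCoercive (fderiv ℝ (fderiv ℝ f) x)) :
    ∀ᶠ y in 𝓝[≠] x, f x < f y := by
  obtain ⟨C, hC, hcoer⟩ := hB
  have hcont : Continuous (fderiv ℝ (fderiv ℝ f)) :=
    (hf.fderiv_right (m := 1) (by norm_num)).continuous_fderiv one_ne_zero
  obtain ⟨δ, hδ, hnear⟩ := eventually_nhds_iff_ball.1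
    ((hcont.continuousAt (x := x)).eventually_mem
      (ball_mem_nhds (fderiv ℝ (fderiv ℝ f) x) (half_pos hC)))
  refine eventually_nhdsWithin_iff.2 (eventually_nhds_iff_ball.2 ⟨δ, hδ, fun y hy hne => ?_⟩)
  have hyx : 0 < ‖y - x‖ := norm_pos_iff.2 (sub_ne_zero.2 hne)
  refine add_sub_cancel x y ▸
    lt_add_of_fderiv_fderiv_pos_on_segment hf (h := y - x) (by simp [hx]) fun t ht => ?_
  set h := y - x
  have hseg : x + t • h ∈ ball x δ := by
    rw [mem_ball_iff_norm] at hy ⊢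
    rw [add_sub_cancel_left, norm_smul, Real.norm_of_nonneg ht.1]
    nlinarith [ht.2]
  have hclose : |fderiv ℝ (fderiv ℝ f) (x + t • h) h h - fderiv ℝ (fderiv ℝ f) x h h|
      ≤ C / 2 * ‖h‖ * ‖h‖ := by
    have := (fderiv ℝ (fderiv ℝ f) (x + t • h) - fderiv ℝ (fderiv ℝ f) x).le_opNorm₂ h h
    have hd : ‖fderiv ℝ (fderiv ℝ f) (x + t • h) - fderiv ℝ (fderiv ℝ f) x‖ < C / 2 :=
      (dist_eq_norm (E := E →L[ℝ] E →L[ℝ] ℝ) _ _).symm.trans_lt (hnear _ hseg)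
    simp only [sub_apply, Real.norm_eq_abs] at this
    exact this.trans (by gcongr)
  nlinarith [hcoer h, abs_le.1 hclose, mul_pos hyx hyx]

end SecondDerivativeTest

theorem isCoercive_of_apply_self_pos {E : Type*} [NormedAddCommGroup E] [NormedSpace ℝ E]
    [FiniteDimensional ℝ E] (B : E →L[ℝ] E →L[ℝ] ℝ) (hB : ∀ u, u ≠ 0 → 0 < B u u) :
    IsCoercive B := by
  rcases subsingleton_or_nontrivial E with hE | hE
  · exact ⟨1, one_pos, fun u => by simp [Subsingleton.elim u 0]⟩
  obtain ⟨u₀, hu₀, hmin⟩ := (isCompact_sphere (0 : E) 1).exists_isMinOn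
    (NormedSpace.sphere_nonempty.2 zero_le_one) (f := fun u => B u u) (by fun_prop)
  refine ⟨B u₀ u₀, hB u₀ (ne_zero_of_mem_unit_sphere ⟨u₀, hu₀⟩), fun u => ?_⟩
  rcases eq_or_ne u 0 with rfl | hu
  · simp
  have hu' : 0 < ‖u‖ := norm_pos_iff.2 hu
  have := isMinOn_iff.1 hmin (‖u‖⁻¹ • u) (by simp [norm_smul, hu'.ne'])
  simp only [map_smul, smul_apply, smul_eq_mul] at this
  calc B u₀ u₀ * ‖u‖ * ‖u‖ ≤ ‖u‖⁻¹ * (‖u‖⁻¹ * B u u) * ‖u‖ * ‖u‖ := by gcongr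
    _ = B u u := by field_simp

theorem sub_two_mul_apply_inner_smul_pos {E : Type*} [NormedAddCommGroup E] [InnerProductSpace ℝ E]
    {B : E →L[ℝ] E →L[ℝ] ℝ} (hsymm : ∀ a b, B a b = B b a) {v : E} (hv : ‖v‖ = 1) {lam : ℝ}
    (hlam : lam < 0) (hev : ∀ w, B v w = lam * ⟪v, w⟫)
    (hpos : ∀ w, w ≠ 0 → ⟪w, v⟫ = 0 → 0 < B w w) {h : E} (hh : h ≠ 0) :
    0 < B h h - 2 * B (⟪v, h⟫ • v) (⟪v, h⟫ • v) := by
  set t := ⟪v, h⟫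
  set w := h - t • v
  have hvv : ⟪v, v⟫ = 1 := by rw [real_inner_self_eq_norm_sq, hv, one_pow]
  have hwv : ⟪w, v⟫ = 0 := by
    simp only [w, t, inner_sub_left, real_inner_smul_left, hvv, real_inner_comm v h, mul_one,
      sub_self]
  have hBvw : B v w = 0 := by rw [hev, real_inner_comm, hwv, mul_zero]
  have hBvv : B v v = lam := by rw [hev, hvv, mul_one]
  have hquad : B h h - 2 * B (t • v) (t • v) = B w w - lam * t ^ 2 := by
    have hh : h = w + t • v := by simp [w]
    rw [hh]
    simp only [map_add, map_smul, add_apply, smul_apply, smul_eq_mul, hBvw, hsymm w v, hBvv]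
    ring
  rw [hquad]
  rcases eq_or_ne w 0 with hw | hw
  · have ht : t ≠ 0 := fun ht => hh (by simpa [w, ht] using hw)
    rw [hw, map_zero, zero_sub]
    nlinarith [sq_pos_of_ne_zero ht]
  · nlinarith [hpos w hw hwv, sq_nonneg t]

section IMF

variable {E : Type*} [NormedAddCommGroup E] [InnerProductSpace ℝ E]

/-- The IMF auxiliary functional `L` with `(α, β) = (0, 2)`. -/
def imfAux (F : E → ℝ) (φs v φ : E) : ℝ :=
  F φ - 2 * F (φs + ⟪v, φ - φs⟫ • v)

theorem hasFDerivAt_add_inner_sub_smul (a v x : E) :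
    HasFDerivAt (fun φ => a + ⟪v, φ - a⟫ • v) ((innerSL ℝ v).smulRight v) x := by
  simpa using (((innerSL ℝ v).smulRight v).hasFDerivAt.comp x
    ((hasFDerivAt_id x).sub_const a)).const_add a

variable {F : E → ℝ} {φs v : E}

theorem contDiff_imfAux {n : WithTop ℕ∞} (hF : ContDiff ℝ n F) : ContDiff ℝ n (imfAux F φs v) :=
  hF.sub (contDiff_const.mul (hF.comp (contDiff_const.add
    ((contDiff_const.inner ℝ (contDiff_id.sub contDiff_const)).smul contDiff_const))))

theorem fderiv_imfAux (hF : Differentiable ℝ F) :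
    fderiv ℝ (imfAux F φs v) = fun φ => fderiv ℝ F φ -
      (2 : ℝ) • (fderiv ℝ F (φs + ⟪v, φ - φs⟫ • v)).comp ((innerSL ℝ v).smulRight v) :=
  funext fun φ => ((hF φ).hasFDerivAt.sub (((hF _).hasFDerivAt.comp φ
    (hasFDerivAt_add_inner_sub_smul φs v φ)).const_smul (2 : ℝ))).fderiv

theorem fderiv_imfAux_self (hF : Differentiable ℝ F) (hcrit : fderiv ℝ F φs = 0) :
    fderiv ℝ (imfAux F φs v) φs = 0 := by
  simp [fderiv_imfAux hF, hcrit]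

theorem fderiv_fderiv_imfAux_apply (hF : ContDiff ℝ 2 F) (φ h k : E) :
    fderiv ℝ (fderiv ℝ (imfAux F φs v)) φ h k = fderiv ℝ (fderiv ℝ F) φ h k -
      2 * fderiv ℝ (fderiv ℝ F) (φs + ⟪v, φ - φs⟫ • v) (⟪v, h⟫ • v) (⟪v, k⟫ • v) := by
  have hF₂ : Differentiable ℝ (fderiv ℝ F) :=
    (hF.fderiv_right (m := 1) le_rfl).differentiable one_ne_zero
  have hD : HasFDerivAt (fun φ => fderiv ℝ F φ -
      (2 : ℝ) • (fderiv ℝ F (φs + ⟪v, φ - φs⟫ • v)).comp ((innerSL ℝ v).smulRight v)) _ φ :=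
    (hF₂ φ).hasFDerivAt.sub ((((hF₂ _).hasFDerivAt.comp φ
      (hasFDerivAt_add_inner_sub_smul φs v φ)).clm_comp
        (hasFDerivAt_const ((innerSL ℝ v).smulRight v) φ)).const_smul (2 : ℝ))
  rw [fderiv_imfAux (hF.differentiable (by norm_num)), hD.fderiv]
  simp only [Function.comp_apply, ContinuousLinearMap.comp_zero, zero_add, sub_apply, smul_apply,
    ContinuousLinearMap.comp_apply, ContinuousLinearMap.smulRight_apply, coe_innerSL_apply,
    map_smul, ContinuousLinearMap.flip_apply, ContinuousLinearMap.compL_apply, smul_eq_mul]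
  ring

end IMF

/-- The saddle point is a strict local minimizer of the IMF auxiliary functional
(part (1) of the convergence theorem, with `α = 0`, `β = 2`): if `φ*` is a
nondegenerate index-1 saddle point of a `C²` functional `F` on a finite-dimensional
real inner product space (unit min-mode `v` with eigenvalue `λ < 0`, Hessian positive
definite on the orthogonal complement of `v`), then `φ*` is a strict local minimizer of
`L(φ) = F(φ) − 2 F(φ* + ⟨v, φ − φ*⟩ • v)`. -/
theorem saddle_is_strict_local_min_of_aux {E : Type*} [NormedAddCommGroup E]
    [InnerProductSpace ℝ E] [FiniteDimensional ℝ E]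
    (F : E → ℝ) (hF : ContDiff ℝ 2 F)
    (φs : E) (hcrit : gradient F φs = 0)
    (v : E) (hv : ‖v‖ = 1) (lam : ℝ) (hlam : lam < 0)
    (hev : ∀ w : E, fderiv ℝ (fderiv ℝ F) φs v w = lam * ⟪v, w⟫)
    (hpos : ∀ w : E, w ≠ 0 → ⟪w, v⟫ = 0 → 0 < fderiv ℝ (fderiv ℝ F) φs w w) :
    ∃ ε > 0, ∀ φ : E, φ ≠ φs → ‖φ - φs‖ < ε →
      F φs - 2 * F (φs + ⟪v, φs - φs⟫ • v) <
        F φ - 2 * F (φs + ⟪v, φ - φs⟫ • v) := by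
  have hfderiv : fderiv ℝ F φs = 0 := by simpa [gradient] using hcrit
  have hsymm : ∀ a b : E, fderiv ℝ (fderiv ℝ F) φs a b = fderiv ℝ (fderiv ℝ F) φs b a :=
    hF.contDiffAt.isSymmSndFDerivAt (by simp)
  have hcoer : IsCoercive (fderiv ℝ (fderiv ℝ (imfAux F φs v)) φs) :=
    isCoercive_of_apply_self_pos _ fun h hh => by
      simpa [fderiv_fderiv_imfAux_apply hF] using
        sub_two_mul_apply_inner_smul_pos hsymm hv hlam hev hpos hh
  obtain ⟨ε, hε, hmin⟩ := mem_nhdsWithin_iff.1 <|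
    eventually_lt_of_fderiv_eq_zero_of_isCoercive (contDiff_imfAux hF)
      (fderiv_imfAux_self (hF.differentiable (by simp)) hfderiv) hcoer
  exact ⟨ε, hε, fun φ hne hlt => hmin ⟨mem_ball_iff_norm.2 hlt, hne⟩⟩
end

section
/- The saddle point is a strict local minimizer of the projected IMF auxiliary functional on the mass-conservation affine subspace (projected version of part (1) of the convergence theorem): let E be a finite-dimensional real inner product space, V ⊆ E a linear subspace with orthogonal projection P onto V, and F : E → ℝ twice continuously differentiable. Suppose φ* ∈ E satisfies P(∇F(φ*)) = 0, and the second derivative B of F at φ* satisfies: there exist v ∈ V with ‖v‖ = 1 and λ < 0 such that B(v, w) = λ ⟨v, w⟩ for all w ∈ V, and B(w, w) > 0 for every nonzero w ∈ V with ⟨w, v⟩ = 0. Define L(φ) = F(φ) − 2 F(φ* + ⟨v, φ − φ*⟩ · v). Then φ* is a strict local minimizer of L restricted to the affine subspace φ* + V: there is ε > 0 such that L(φ) > L(φ*) for every φ ∈ φ* + V with φ ≠ φ* and ‖φ − φ*‖ < ε. -/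
/-!
Write `φ = φ* + w` with `w ∈ V`, let `t = ⟪v, w⟫` and let `B` be the Hessian of `F` at `φ*`.
Since `∇F(φ*)` is orthogonal to `V`, second-order Taylor expansion at `w` and at `t • v` gives
`L(φ) - L(φ*) = ½ (B(w, w) - 2λt²) + o(‖w‖²)`. Splitting `w = (w - t • v) + t • v`, the eigen-relation
turns `B(w, w) - 2λt²` into `B(w - t • v, w - t • v) - λt²`, which is positive on `V \ {0}`: the
first term is positive off the line of `v`, the second is positive on it. By compactness of the
unit sphere of `V` this form dominates `c‖w‖²` for some `c > 0`, which absorbs the remainder.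
-/

open RealInnerProductSpace Asymptotics Filter Metric Topology

section Taylor

variable {E : Type*} [NormedAddCommGroup E] [NormedSpace ℝ E]

theorem hasFDerivAt_taylor_two_remainder {F : E → ℝ} {x u : E} {B : E →L[ℝ] E →L[ℝ] ℝ}
    (hB : ∀ a b, B a b = B b a) (hF : DifferentiableAt ℝ F (x + u)) :
    HasFDerivAt (fun h => F (x + h) - fderiv ℝ F x h - (1 / 2) * B h h)
      (fderiv ℝ F (x + u) - fderiv ℝ F x - B u) u := by
  have hshift : HasFDerivAt (fun h => F (x + h)) (fderiv ℝ F (x + u)) u := by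
    have := hF.hasFDerivAt.comp u ((hasFDerivAt_id u).const_add x)
    rwa [ContinuousLinearMap.comp_id] at this
  have hquad := B.hasFDerivAt_of_bilinear (hasFDerivAt_id u) (hasFDerivAt_id u)
  refine ((hshift.sub (fderiv ℝ F x).hasFDerivAt).sub (hquad.const_mul (1 / 2))).congr_fderiv ?_
  ext h
  simp only [ContinuousLinearMap.precompR_apply, ContinuousLinearMap.precompL_apply,
    ContinuousLinearMap.compL_apply, ContinuousLinearMap.comp_id, ContinuousLinearMap.id_apply,
    sub_apply, add_apply, smul_apply, smul_eq_mul, id_eq, hB h u]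
  ring

theorem ContDiffAt.isLittleO_taylor_two {F : E → ℝ} {x : E} (hF : ContDiffAt ℝ 2 F x) :
    (fun h => F (x + h) - F x - fderiv ℝ F x h - (1 / 2) * fderiv ℝ (fderiv ℝ F) x h h)
      =o[𝓝 0] fun h => ‖h‖ ^ 2 := by
  set B := fderiv ℝ (fderiv ℝ F) x
  have hsymm : ∀ a b, B a b = B b a := (hF.isSymmSndFDerivAt (by simp)).eq
  have hB : HasFDerivAt (fderiv ℝ F) B x :=
    ((hF.fderiv_right (m := 1) le_rfl).differentiableAt one_ne_zero).hasFDerivAt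
  have hdiff : ∀ᶠ u in 𝓝 (0 : E), DifferentiableAt ℝ F (x + u) := by
    have hx : Tendsto (fun u : E => x + u) (𝓝 0) (𝓝 x) := by
      simpa using (continuous_const_add x).tendsto (0 : E)
    exact hx.eventually ((hF.eventually (by simp)).mono fun y hy => hy.differentiableAt (by simp))
  refine isLittleO_iff.2 fun ε hε => ?_
  have hlin := (hasFDerivAt_iff_isLittleO_nhds_zero.1 hB).def hε
  obtain ⟨δ, hδ, hball⟩ := eventually_nhds_iff_ball.1 (hdiff.and hlin)
  filter_upwards [ball_mem_nhds (0 : E) hδ] with w hw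
  have hsub : closedBall (0 : E) ‖w‖ ⊆ ball 0 δ :=
    closedBall_subset_ball (by simpa using hw)
  have hbound : ∀ u ∈ closedBall (0 : E) ‖w‖,
      ‖fderiv ℝ F (x + u) - fderiv ℝ F x - B u‖ ≤ ε * ‖w‖ := fun u hu =>
    (hball u (hsub hu)).2.trans (by gcongr; simpa using hu)
  have hmvt := (convex_closedBall (0 : E) ‖w‖).norm_image_sub_le_of_norm_hasFDerivWithin_le
    (fun u hu => (hasFDerivAt_taylor_two_remainder hsymm (hball u (hsub hu)).1).hasFDerivWithinAt)
    hbound (mem_closedBall_self (norm_nonneg w)) (mem_closedBall_zero_iff.2 le_rfl)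
  simp only [add_zero, map_zero, mul_zero, sub_zero] at hmvt
  calc ‖F (x + w) - F x - fderiv ℝ F x w - 1 / 2 * B w w‖
      = ‖F (x + w) - fderiv ℝ F x w - 1 / 2 * B w w - F x‖ := by congr 1; ring
    _ ≤ ε * ‖w‖ * ‖w‖ := hmvt
    _ = ε * ‖‖w‖ ^ 2‖ := by rw [norm_pow, norm_norm]; ring

end Taylor

theorem isCoercive_of_pos {E : Type*} [NormedAddCommGroup E] [NormedSpace ℝ E]
    [FiniteDimensional ℝ E] {B : E →L[ℝ] E →L[ℝ] ℝ} (hB : ∀ u ≠ 0, 0 < B u u) :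
    IsCoercive B := by
  obtain ⟨C, hC, hCB⟩ := (isCompact_sphere (0 : E) 1).exists_forall_le'
    (by fun_prop : Continuous fun u => B u u).continuousOn
    (fun u hu => hB u (ne_zero_of_mem_unit_sphere ⟨u, hu⟩))
  refine ⟨C, hC, fun u => ?_⟩
  rcases eq_or_ne u 0 with rfl | hu
  · simp
  have hunit := hCB (‖u‖⁻¹ • u) (by simp [norm_smul, hu])
  have hpos : 0 < ‖u‖ := norm_pos_iff.2 hu
  simp only [map_smul, smul_apply, smul_eq_mul] at hunit
  calc C * ‖u‖ * ‖u‖ ≤ ‖u‖⁻¹ * (‖u‖⁻¹ * B u u) * ‖u‖ * ‖u‖ := by gcongr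
    _ = B u u := by field_simp

theorem Submodule.exists_pos_mul_sq_norm_le_of_pos {E : Type*} [NormedAddCommGroup E]
    [NormedSpace ℝ E] (V : Submodule ℝ E) [FiniteDimensional ℝ V] {B : E →L[ℝ] E →L[ℝ] ℝ}
    (hB : ∀ w ∈ V, w ≠ 0 → 0 < B w w) : ∃ c > 0, ∀ w ∈ V, c * ‖w‖ ^ 2 ≤ B w w := by
  obtain ⟨c, hc, hcB⟩ := isCoercive_of_pos (B := B.bilinearComp V.subtypeL V.subtypeL)
    fun u hu => hB u u.2 (by simpa using hu)
  exact ⟨c, hc, fun w hw => by simpa [sq, mul_assoc] using hcB ⟨w, hw⟩⟩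

section

variable {E : Type*} [NormedAddCommGroup E] [InnerProductSpace ℝ E] {V : Submodule ℝ E}
  {B : E →L[ℝ] E →L[ℝ] ℝ} {v : E} {lam : ℝ}

theorem fderiv_apply_eq_zero_of_orthogonalProjectionOnto_gradient [CompleteSpace E]
    [V.HasOrthogonalProjection] {f : E → ℝ} {x : E}
    (h : V.orthogonalProjectionOnto (gradient f x) = 0) {w : E} (hw : w ∈ V) :
    fderiv ℝ f x w = 0 := by
  rw [← inner_gradient_left]
  exact Submodule.inner_left_of_mem_orthogonal hw
    (Submodule.orthogonalProjectionOnto_eq_zero_iff.1 h)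

theorem inner_sub_inner_smul_eq_zero (hv : ‖v‖ = 1) (w : E) :
    ⟪v, w - ⟪v, w⟫ • v⟫ = 0 := by
  simp [inner_sub_right, real_inner_smul_right, hv]

theorem apply_self_eq_of_eigen (hB : ∀ a b, B a b = B b a) (hvV : v ∈ V) (hv : ‖v‖ = 1)
    (hev : ∀ w ∈ V, B v w = lam * ⟪v, w⟫) {w : E} (hw : w ∈ V) :
    B w w = B (w - ⟪v, w⟫ • v) (w - ⟪v, w⟫ • v) + lam * ⟪v, w⟫ ^ 2 := by
  set t := ⟪v, w⟫
  set u := w - t • v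
  have hvv : ⟪v, v⟫ = 1 := by simp [hv]
  have hvu : B v u = 0 := by
    rw [hev u (V.sub_mem hw (V.smul_mem t hvV)), inner_sub_inner_smul_eq_zero hv, mul_zero]
  have hw' : w = u + t • v := by simp [u]
  rw [hw']
  simp only [map_add, map_smul, add_apply, smul_apply, smul_eq_mul, hvu, hB u v, hev v hvV, hvv]
  ring

theorem apply_self_sub_two_mul_inner_sq_pos (hB : ∀ a b, B a b = B b a) (hvV : v ∈ V)
    (hv : ‖v‖ = 1) (hlam : lam < 0) (hev : ∀ w ∈ V, B v w = lam * ⟪v, w⟫)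
    (hpos : ∀ w ∈ V, w ≠ 0 → ⟪w, v⟫ = 0 → 0 < B w w) {w : E} (hw : w ∈ V) (hw0 : w ≠ 0) :
    0 < B w w - 2 * lam * ⟪v, w⟫ ^ 2 := by
  rw [apply_self_eq_of_eigen hB hvV hv hev hw]
  set t := ⟪v, w⟫
  set u := w - t • v
  rcases eq_or_ne u 0 with hu | hu
  · have ht : t ≠ 0 := by
      rintro ht
      exact hw0 (by simpa [u, ht] using hu)
    rw [hu]
    simp only [map_zero]
    nlinarith [sq_pos_of_ne_zero ht]
  · have huv : ⟪u, v⟫ = 0 := by rw [real_inner_comm, inner_sub_inner_smul_eq_zero hv]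
    have := hpos u (V.sub_mem hw (V.smul_mem t hvV)) hu huv
    nlinarith [sq_nonneg t]

end

/-- The saddle point is a strict local minimizer of the projected IMF auxiliary
functional on the mass-conservation affine subspace: if `P ∇F(φ*) = 0` (with `P` the
orthogonal projection onto a subspace `V`) and the second derivative of `F` at `φ*` has
on `V` a unit min-mode `v ∈ V` with eigenvalue `λ < 0` and is positive definite on the
complement of `v` within `V`, then `φ*` is a strict local minimizer of
`L(φ) = F(φ) − 2 F(φ* + ⟨v, φ − φ*⟩ • v)` restricted to the affine subspace `φ* + V`. -/
theorem saddle_is_strict_local_min_of_aux_projected {E : Type*} [NormedAddCommGroup E]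
    [InnerProductSpace ℝ E] [FiniteDimensional ℝ E]
    (V : Submodule ℝ E)
    (F : E → ℝ) (hF : ContDiff ℝ 2 F)
    (φs : E) (hcrit : V.orthogonalProjectionOnto (gradient F φs) = 0)
    (v : E) (hvV : v ∈ V) (hv : ‖v‖ = 1) (lam : ℝ) (hlam : lam < 0)
    (hev : ∀ w ∈ V, fderiv ℝ (fderiv ℝ F) φs v w = lam * ⟪v, w⟫)
    (hpos : ∀ w ∈ V, w ≠ 0 → ⟪w, v⟫ = 0 → 0 < fderiv ℝ (fderiv ℝ F) φs w w) :
    ∃ ε > 0, ∀ φ : E, φ - φs ∈ V → φ ≠ φs → ‖φ - φs‖ < ε →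
      F φs - 2 * F (φs + ⟪v, φs - φs⟫ • v) <
        F φ - 2 * F (φs + ⟪v, φ - φs⟫ • v) := by
  set B := fderiv ℝ (fderiv ℝ F) φs with hB
  have hsymm : ∀ a b, B a b = B b a := (hF.contDiffAt.isSymmSndFDerivAt (by simp)).eq
  obtain ⟨c, hc, hcoer⟩ := V.exists_pos_mul_sq_norm_le_of_pos
    (B := B - (2 * lam) • (innerSL ℝ v).smulRight (innerSL ℝ v)) fun w hw hw0 => by
      simpa [mul_assoc, sq] using
        apply_self_sub_two_mul_inner_sq_pos hsymm hvV hv hlam hev hpos hw hw0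
  obtain ⟨δ, hδ, htaylor⟩ := eventually_nhds_iff_ball.1
    ((hF.contDiffAt (x := φs)).isLittleO_taylor_two.def (by positivity : 0 < c / 8))
  rw [← hB] at htaylor
  refine ⟨δ, hδ, fun φ hφV hφne hφδ => ?_⟩
  set w := φ - φs
  set t := ⟪v, w⟫
  have htv : ‖t • v‖ ≤ ‖w‖ := by
    simpa [norm_smul, hv, t] using abs_real_inner_le_norm v w
  have hexp_w : |F (φs + w) - F φs - 1 / 2 * B w w| ≤ c / 8 * ‖w‖ ^ 2 := by
    simpa [fderiv_apply_eq_zero_of_orthogonalProjectionOnto_gradient hcrit hφV]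
      using htaylor w (by simpa using hφδ)
  have hexp_tv : |F (φs + t • v) - F φs - 1 / 2 * (lam * t ^ 2)| ≤ c / 8 * ‖w‖ ^ 2 := by
    have hBtv : B (t • v) (t • v) = lam * t ^ 2 := by
      simp only [map_smul, smul_apply, smul_eq_mul, hev v hvV, real_inner_self_eq_norm_sq, hv]
      ring
    have := htaylor (t • v) (by simpa using htv.trans_lt hφδ)
    rw [fderiv_apply_eq_zero_of_orthogonalProjectionOnto_gradient hcrit (V.smul_mem t hvV),
      hBtv, sub_zero, Real.norm_eq_abs, norm_pow, norm_norm] at this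
    exact this.trans (by gcongr)
  have hcw : c * ‖w‖ ^ 2 ≤ B w w - 2 * lam * t ^ 2 := by simpa [sq, t] using hcoer w hφV
  have hw0 : 0 < ‖w‖ := norm_pos_iff.2 (sub_ne_zero.2 hφne)
  rw [show φ = φs + w by simp [w], sub_self, inner_zero_right, zero_smul, add_zero]
  nlinarith [abs_le.1 hexp_w, abs_le.1 hexp_tv, mul_pos hc (pow_pos hw0 2)]
end

section
/- Strict convexity of the IMF auxiliary functional near the saddle point (part (2) of the convergence theorem, with the direction frozen at the min-mode): under the hypotheses that E is a finite-dimensional real inner product space, F : E → ℝ is twice continuously differentiable, φ* is a critical point of F (∇F(φ*) = 0), and the second derivative B of F at φ* admits a unit vector v and λ < 0 with B(v, w) = λ⟨v, w⟩ for all w and B(w, w) > 0 for all nonzero w ⊥ v, the auxiliary functional L(φ) = F(φ) − 2 F(φ* + ⟨v, φ − φ*⟩ · v) is strictly convex on some open ball centered at φ*: there exists ε > 0 such that L is strictly convex on {φ : ‖φ − φ*‖ < ε}. -/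
/-!
Along the line `t ↦ φ + t • d` the second derivative of `L` is
`D²F(φ)(d, d) - 2 ⟪v, d⟫² D²F(φ̂)(v, v)`. At `φ*` this is `D²F(φ*)(d, d) - 2 λ ⟪v, d⟫²`, and
splitting `d = a • v + u` with `u ⊥ v` turns it into `D²F(φ*)(u, u) - λ a² > 0`: subtracting twice
the unstable direction flips its sign. In finite dimension positive definiteness of a continuous
family of bilinear forms is an open condition, so it persists on a ball around `φ*`, and positive
second derivatives along every segment of the ball give strict convexity there.
-/

open RealInnerProductSpace Set Filter Topology

section Segment

variable {E G : Type*} [NormedAddCommGroup E] [NormedSpace ℝ E] [NormedAddCommGroup G]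
  [NormedSpace ℝ G]

theorem strictConvexOn_of_deriv2_line_pos {f : E → ℝ} {s : Set E} (hs : Convex ℝ s)
    (hf : ContinuousOn f s)
    (hf'' : ∀ x ∈ s, ∀ d ≠ 0, 0 < deriv^[2] (fun t : ℝ => f (x + t • d)) 0) :
    StrictConvexOn ℝ s f := by
  refine ⟨hs, fun x hx y hy hxy a b ha hb hab => ?_⟩
  set g : ℝ → ℝ := fun t => f (x + t • (y - x)) with hg_def
  have hseg : ∀ t ∈ Icc (0 : ℝ) 1, x + t • (y - x) ∈ s := fun t ht => hs.add_smul_sub_mem hx hy ht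
  have hg : StrictConvexOn ℝ (Icc 0 1) g := by
    refine strictConvexOn_of_deriv2_pos (convex_Icc 0 1)
      (hf.comp (by fun_prop) hseg) fun t ht => ?_
    rw [interior_Icc] at ht
    have hshift : (fun u : ℝ => f ((x + t • (y - x)) + u • (y - x))) = fun u => g (t + u) := by
      ext u; simp only [hg_def, add_smul, add_assoc]
    have := hf'' _ (hseg t (Ioo_subset_Icc_self ht)) _ (sub_ne_zero.2 hxy.symm)
    simpa only [hshift, ← iteratedDeriv_eq_iterate, iteratedDeriv_comp_const_add, add_zero]
      using this
  have key := hg.2 (left_mem_Icc.2 zero_le_one) (right_mem_Icc.2 zero_le_one) zero_ne_one ha hb hab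
  have hb' : a • x + b • y = x + b • (y - x) := by
    rw [eq_sub_of_add_eq hab]; module
  simpa [hg_def, hb'] using key

theorem hasDerivAt_comp_add_smul {f : E → G} {x d : E} {t : ℝ}
    (hf : DifferentiableAt ℝ f (x + t • d)) :
    HasDerivAt (fun t : ℝ => f (x + t • d)) (fderiv ℝ f (x + t • d) d) t := by
  have hline : HasDerivAt (fun t : ℝ => x + t • d) d t := by
    simpa using ((hasDerivAt_id t).smul_const d).const_add x
  exact hf.hasFDerivAt.comp_hasDerivAt t hline

theorem hasDerivAt_fderiv_comp_add_smul {f : E → G} {x d : E} {t : ℝ}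
    (hf : DifferentiableAt ℝ (fderiv ℝ f) (x + t • d)) :
    HasDerivAt (fun t : ℝ => fderiv ℝ f (x + t • d) d)
      (fderiv ℝ (fderiv ℝ f) (x + t • d) d d) t :=
  (ContinuousLinearMap.apply ℝ G d).hasFDerivAt.comp_hasDerivAt t (hasDerivAt_comp_add_smul hf)

end Segment

section Coercive

variable {E : Type*} [NormedAddCommGroup E] [NormedSpace ℝ E] [FiniteDimensional ℝ E]

theorem exists_pos_mul_sq_le_of_pos (B : E →L[ℝ] E →L[ℝ] ℝ) (hB : ∀ w ≠ 0, 0 < B w w) :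
    ∃ c > 0, ∀ w, c * ‖w‖ ^ 2 ≤ B w w := by
  obtain ⟨c, hc, hcB⟩ := (isCompact_sphere (0 : E) 1).exists_forall_le'
    (B.continuous₂.comp (continuous_id.prodMk continuous_id)).continuousOn
    fun w hw => hB w (ne_zero_of_mem_unit_sphere ⟨w, hw⟩)
  refine ⟨c, hc, fun w => ?_⟩
  rcases eq_or_ne w 0 with rfl | hw
  · simp
  have hnw : 0 < ‖w‖ := norm_pos_iff.2 hw
  have hunit : ‖w‖⁻¹ • w ∈ Metric.sphere (0 : E) 1 := by
    simp [norm_smul, hnw.ne']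
  calc c * ‖w‖ ^ 2 ≤ B (‖w‖⁻¹ • w) (‖w‖⁻¹ • w) * ‖w‖ ^ 2 := by gcongr; exact hcB _ hunit
    _ = B w w := by
      simp only [map_smul, smul_apply, smul_eq_mul]
      field_simp

theorem ContinuousAt.eventually_forall_apply_self_pos {X : Type*} [TopologicalSpace X]
    {M : X → E →L[ℝ] E →L[ℝ] ℝ} {x₀ : X} (hM : ContinuousAt M x₀)
    (h₀ : ∀ w ≠ 0, 0 < M x₀ w w) : ∀ᶠ x in 𝓝 x₀, ∀ w ≠ 0, 0 < M x w w := by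
  obtain ⟨c, hc, hcM⟩ := exists_pos_mul_sq_le_of_pos (M x₀) h₀
  filter_upwards [(Metric.continuousAt_iff' (f := M)).1 hM c hc] with x hx w hw
  have hnw : 0 < ‖w‖ := norm_pos_iff.2 hw
  have hclose : ‖M x - M x₀‖ < c := by
    simpa only [dist_eq_norm (E := E →L[ℝ] E →L[ℝ] ℝ)] using hx
  have hperturb : |(M x - M x₀) w w| < c * ‖w‖ ^ 2 := by
    rw [← Real.norm_eq_abs]
    calc ‖(M x - M x₀) w w‖ ≤ ‖M x - M x₀‖ * ‖w‖ * ‖w‖ := (M x - M x₀).le_opNorm₂ w w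
      _ < c * ‖w‖ ^ 2 := by rw [mul_assoc, ← sq]; gcongr
  have hsplit : M x w w = M x₀ w w + (M x - M x₀) w w := by simp
  linarith [neg_abs_le ((M x - M x₀) w w), hcM w]

end Coercive

section AuxFunctional

variable {E : Type*} [NormedAddCommGroup E] [InnerProductSpace ℝ E]

theorem sub_two_mul_inner_sq_pos_of_saddle {Q : E →L[ℝ] E →L[ℝ] ℝ} (hQ : ∀ a b, Q a b = Q b a)
    {v : E} (hv : ‖v‖ = 1) {lam : ℝ} (hlam : lam < 0) (hev : ∀ w, Q v w = lam * ⟪v, w⟫)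
    (hpos : ∀ w ≠ 0, ⟪w, v⟫ = 0 → 0 < Q w w) {w : E} (hw : w ≠ 0) :
    0 < Q w w - 2 * lam * ⟪v, w⟫ ^ 2 := by
  set a := ⟪v, w⟫
  set u := w - a • v with hu
  have hvu : ⟪v, u⟫ = 0 := by
    simp [hu, a, inner_sub_right, inner_smul_right, hv]
  have hQvu : Q v u = 0 := by rw [hev, hvu, mul_zero]
  have hQvv : Q v v = lam := by rw [hev, real_inner_self_eq_norm_sq, hv]; ring
  have hQw : Q w w - 2 * lam * a ^ 2 = Q u u + (-lam) * a ^ 2 := by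
    rw [show w = a • v + u by simp [hu]]
    simp only [map_add, map_smul, add_apply, smul_apply, smul_eq_mul, hQvv, hQvu, hQ u v]
    ring
  rw [hQw]
  rcases eq_or_ne u 0 with hu0 | hu0
  · have ha : a ≠ 0 := by
      rintro ha; apply hw; rw [hu, ha, zero_smul, sub_zero] at hu0; exact hu0
    rw [hu0, map_zero, zero_add]
    exact mul_pos (neg_pos.2 hlam) (by positivity)
  · have := hpos u hu0 (by rw [real_inner_comm, hvu])
    nlinarith [sq_nonneg a]

noncomputable def auxFunctional (F : E → ℝ) (φs v φ : E) : ℝ :=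
  F φ - 2 * F (φs + ⟪v, φ - φs⟫ • v)

noncomputable def auxHessian (F : E → ℝ) (φs v φ : E) : E →L[ℝ] E →L[ℝ] ℝ :=
  fderiv ℝ (fderiv ℝ F) φ -
    (2 * fderiv ℝ (fderiv ℝ F) (φs + ⟪v, φ - φs⟫ • v) v v) • (innerSL ℝ v).smulRight (innerSL ℝ v)

theorem auxHessian_apply (F : E → ℝ) (φs v φ w u : E) :
    auxHessian F φs v φ w u = fderiv ℝ (fderiv ℝ F) φ w u -
      2 * fderiv ℝ (fderiv ℝ F) (φs + ⟪v, φ - φs⟫ • v) v v * (⟪v, w⟫ * ⟪v, u⟫) := by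
  simp [auxHessian]

variable {F : E → ℝ}

theorem continuous_auxFunctional (hF : Continuous F) (φs v : E) :
    Continuous (auxFunctional F φs v) := by
  unfold auxFunctional
  fun_prop

theorem continuous_auxHessian (hF : ContDiff ℝ 2 F) (φs v : E) :
    Continuous (auxHessian F φs v) := by
  have hQ : Continuous (fderiv ℝ (fderiv ℝ F)) :=
    (hF.fderiv_right (by norm_num)).continuous_fderiv one_ne_zero
  unfold auxHessian
  fun_prop

theorem deriv2_auxFunctional_line (hF : ContDiff ℝ 2 F) (φs v x d : E) :
    deriv^[2] (fun t : ℝ => auxFunctional F φs v (x + t • d)) 0 = auxHessian F φs v x d d := by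
  set p := φs + ⟪v, x - φs⟫ • v
  set e := ⟪v, d⟫ • v
  have hproj : ∀ t : ℝ, φs + ⟪v, x + t • d - φs⟫ • v = p + t • e := fun t => by
    simp only [p, e, add_sub_right_comm x, inner_add_right, inner_smul_right, add_smul, smul_smul]
    abel
  have hF1 : Differentiable ℝ F := hF.differentiable (by norm_num)
  have hF2 : Differentiable ℝ (fderiv ℝ F) :=
    (hF.fderiv_right (by norm_num)).differentiable one_ne_zero
  have hderiv : deriv (fun t : ℝ => F (x + t • d) - 2 * F (p + t • e)) =
      fun t => fderiv ℝ F (x + t • d) d - 2 * fderiv ℝ F (p + t • e) e := funext fun t =>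
    ((hasDerivAt_comp_add_smul (hF1 _)).sub ((hasDerivAt_comp_add_smul (hF1 _)).const_mul 2)).deriv
  simp only [auxFunctional, hproj, Function.iterate_succ, Function.iterate_zero,
    Function.comp_apply, hderiv, id]
  refine ((hasDerivAt_fderiv_comp_add_smul (hF2 _)).sub
    ((hasDerivAt_fderiv_comp_add_smul (hF2 _)).const_mul 2)).deriv.trans ?_
  simp only [zero_smul, add_zero, auxHessian_apply, e, map_smul, smul_apply, smul_eq_mul]
  ring

end AuxFunctional

theorem aux_functional_strict_convex_near_saddle_general {E : Type*} [NormedAddCommGroup E]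
    [InnerProductSpace ℝ E] [FiniteDimensional ℝ E]
    (F : E → ℝ) (hF : ContDiff ℝ 2 F)
    (φs : E)
    (v : E) (hv : ‖v‖ = 1) (lam : ℝ) (hlam : lam < 0)
    (hev : ∀ w : E, fderiv ℝ (fderiv ℝ F) φs v w = lam * ⟪v, w⟫)
    (hpos : ∀ w : E, w ≠ 0 → ⟪w, v⟫ = 0 → 0 < fderiv ℝ (fderiv ℝ F) φs w w) :
    ∃ ε > 0, StrictConvexOn ℝ (Metric.ball φs ε)
      (fun φ : E => F φ - 2 * F (φs + ⟪v, φ - φs⟫ • v)) := by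
  have hvv : fderiv ℝ (fderiv ℝ F) φs v v = lam := by
    rw [hev, real_inner_self_eq_norm_sq, hv, one_pow, mul_one]
  have hsaddle : ∀ w ≠ 0, 0 < auxHessian F φs v φs w w := fun w hw => by
    have := sub_two_mul_inner_sq_pos_of_saddle (hF.contDiffAt.isSymmSndFDerivAt (by simp))
      hv hlam hev hpos hw
    simpa [auxHessian_apply, hvv, sq, mul_assoc] using this
  obtain ⟨ε, hε, hball⟩ := Metric.eventually_nhds_iff_ball.1
    ((continuous_auxHessian hF φs v).continuousAt.eventually_forall_apply_self_pos hsaddle)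
  refine ⟨ε, hε, strictConvexOn_of_deriv2_line_pos (f := auxFunctional F φs v) (convex_ball φs ε)
    (continuous_auxFunctional hF.continuous φs v).continuousOn fun x hx d hd => ?_⟩
  rw [deriv2_auxFunctional_line hF]
  exact hball x hx d hd

/-- Strict convexity of the IMF auxiliary functional near the saddle point (part (2) of
the convergence theorem, with the direction frozen at the min-mode): under the
nondegenerate index-1 saddle hypotheses at `φ*`, the auxiliary functional
`L(φ) = F(φ) − 2 F(φ* + ⟨v, φ − φ*⟩ • v)` is strictly convex on some open ball
centered at `φ*`. -/
theorem aux_functional_strict_convex_near_saddle {E : Type*} [NormedAddCommGroup E]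
    [InnerProductSpace ℝ E] [FiniteDimensional ℝ E]
    (F : E → ℝ) (hF : ContDiff ℝ 2 F)
    (φs : E) (hcrit : gradient F φs = 0)
    (v : E) (hv : ‖v‖ = 1) (lam : ℝ) (hlam : lam < 0)
    (hev : ∀ w : E, fderiv ℝ (fderiv ℝ F) φs v w = lam * ⟪v, w⟫)
    (hpos : ∀ w : E, w ≠ 0 → ⟪w, v⟫ = 0 → 0 < fderiv ℝ (fderiv ℝ F) φs w w) :
    ∃ ε > 0, StrictConvexOn ℝ (Metric.ball φs ε)
      (fun φ : E => F φ - 2 * F (φs + ⟪v, φ - φs⟫ • v)) :=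
  aux_functional_strict_convex_near_saddle_general F hF φs v hv lam hlam hev hpos
end
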